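/- arXiv:1502.01206 — 4 statements merged into one kernel-verified Lean document; each statement's English description precedes it below -/
import Mathlib

section
/- Let (U, V, W) : ℝ → ℝ³ be differentiable and satisfy the system U′ = V·w_z − W·w_y, V′ = W·w_x − U·w_z, W′ = U·w_y − V·w_x for given functions w_x, w_y, w_z : ℝ → ℝ, and suppose U(t)² + V(t)² + W(t)² = 1 and W(t) ≠ 1 for all t. Define the complex-valued function ξ(t) = (U(t) + i·V(t)) / (1 − W(t)). Then ξ is differentiable and satisfies the Riccati equation ξ′ = ((w_y + i·w_x)/2)·ξ² − i·w_z·ξ + (w_y − i·w_x)/2 on ℝ. -/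
open Complex

/-- **Reduction of the system `u′ = u × w` on the unit sphere to a Riccati
equation**: if `(U, V, W)` is differentiable, solves `U′ = V·w_z − W·w_y`,
`V′ = W·w_x − U·w_z`, `W′ = U·w_y − V·w_x`, stays on the unit sphere, and
avoids `W = 1`, then `ξ = (U + iV)/(1 − W)` is differentiable and satisfies
`ξ′ = ((w_y + i·w_x)/2)·ξ² − i·w_z·ξ + (w_y − i·w_x)/2`. -/
theorem xi_satisfies_riccati
    (U V W wx wy wz : ℝ → ℝ)
    (hU : Differentiable ℝ U) (hV : Differentiable ℝ V) (hW : Differentiable ℝ W)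
    (hU' : ∀ t, deriv U t = V t * wz t - W t * wy t)
    (hV' : ∀ t, deriv V t = W t * wx t - U t * wz t)
    (hW' : ∀ t, deriv W t = U t * wy t - V t * wx t)
    (hsphere : ∀ t, U t ^ 2 + V t ^ 2 + W t ^ 2 = 1)
    (hW1 : ∀ t, W t ≠ 1)
    (ξ : ℝ → ℂ)
    (hξ : ∀ t, ξ t = ((U t : ℂ) + I * (V t : ℂ)) / (1 - (W t : ℂ))) :
    Differentiable ℝ ξ ∧
      ∀ t, deriv ξ t
        = (((wy t : ℂ) + I * (wx t : ℂ)) / 2) * ξ t ^ 2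
            - I * (wz t : ℂ) * ξ t
            + ((wy t : ℂ) - I * (wx t : ℂ)) / 2 := by


  have hg : ∀ t, (1 : ℂ) - (W t : ℂ) ≠ 0 := by
    intro t h
    apply hW1 t
    have h1 : (1 : ℂ) = (W t : ℂ) := sub_eq_zero.mp h
    exact_mod_cast h1.symm
  have hd : ∀ t, HasDerivAt ξ
      (((((deriv U t : ℝ) : ℂ) + I * ((deriv V t : ℝ) : ℂ)) * (1 - (W t : ℂ))
        - ((U t : ℂ) + I * (V t : ℂ)) * (-((deriv W t : ℝ) : ℂ))) / (1 - (W t : ℂ)) ^ 2) t := by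
    intro t
    have hf : HasDerivAt (fun s => (U s : ℂ) + I * (V s : ℂ))
        (((deriv U t : ℝ) : ℂ) + I * ((deriv V t : ℝ) : ℂ)) t :=
      ((hU t).hasDerivAt.ofReal_comp).add
        (((hV t).hasDerivAt.ofReal_comp).const_mul I)
    have hgd : HasDerivAt (fun s => (1 : ℂ) - (W s : ℂ)) (-((deriv W t : ℝ) : ℂ)) t := by
      exact ((hW t).hasDerivAt.ofReal_comp).const_sub (1:ℂ)
    exact (hf.div hgd (hg t)).congr_of_eventuallyEq
      (Filter.Eventually.of_forall fun s => hξ s)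
  constructor
  · exact fun t => (hd t).differentiableAt
  · intro t
    rw [(hd t).deriv, hξ t, hU', hV', hW']
    have hs : ((U t : ℂ)) ^ 2 + (V t : ℂ) ^ 2 + (W t : ℂ) ^ 2 = 1 := by
      exact_mod_cast hsphere t
    have hgt := hg t
    have hd2 : ((1 : ℂ) - (W t : ℂ)) ^ 2 ≠ 0 := pow_ne_zero _ hgt
    push_cast
    rw [div_pow, div_eq_iff hd2]
    have h1 : ((U t : ℂ) + I * (V t : ℂ)) ^ 2 / ((1 : ℂ) - (W t : ℂ)) ^ 2
        * ((1 : ℂ) - (W t : ℂ)) ^ 2 = ((U t : ℂ) + I * (V t : ℂ)) ^ 2 :=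
      div_mul_cancel₀ _ hd2
    have h2 : ((U t : ℂ) + I * (V t : ℂ)) / ((1 : ℂ) - (W t : ℂ))
        * ((1 : ℂ) - (W t : ℂ)) ^ 2
        = ((U t : ℂ) + I * (V t : ℂ)) * ((1 : ℂ) - (W t : ℂ)) := by
      rw [sq, ← mul_assoc, div_mul_cancel₀ _ hgt]
    linear_combination
      (-((((wy t : ℂ)) + I * (wx t : ℂ)) / 2)) * h1
      + (I * (wz t : ℂ)) * h2
      + ((((wy t : ℂ)) - I * (wx t : ℂ)) / 2) * hs
      + ((V t : ℂ) * (wz t : ℂ) - (V t : ℂ) * (W t : ℂ) * (wz t : ℂ)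
          - (V t : ℂ) ^ 2 * (wy t : ℂ) / 2 - (U t : ℂ) * (V t : ℂ) * (wx t : ℂ)
          - I / 2 * (V t : ℂ) ^ 2 * (wx t : ℂ)) * Complex.I_sq
end

section
/- Let (U, V, W) : ℝ → ℝ³ be differentiable and satisfy the system U′ = V·w_z − W·w_y, V′ = W·w_x − U·w_z, W′ = U·w_y − V·w_x for given functions w_x, w_y, w_z : ℝ → ℝ, and suppose U(t)² + V(t)² + W(t)² = 1 and U(t) − i·V(t) ≠ 0 for all t. Define the complex-valued function η(t) = (W(t) − 1) / (U(t) − i·V(t)). Then η is differentiable and satisfies the same Riccati equation as ξ = (U + iV)/(1 − W), namely η′ = ((w_y + i·w_x)/2)·η² − i·w_z·η + (w_y − i·w_x)/2 on ℝ. -/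
open Complex


private lemma riccati_algebra (u v w x y z : ℂ) (hd : u - I*v ≠ 0)
    (hs : u^2+v^2+w^2 = 1) :
    ((u*y - v*x)*(u - I*v) - (w-1)*((v*z - w*y) - I*(w*x - u*z))) / (u - I*v)^2
    = ((y + I*x)/2) * ((w-1)/(u - I*v))^2 - I*z*((w-1)/(u-I*v)) + (y - I*x)/2 := by
  have hd2 : (u - I*v)^2 ≠ 0 := pow_ne_zero 2 hd
  have hI : (I:ℂ)^2 = -1 := Complex.I_sq
  have hrhs : ((y + I*x)/2) * ((w-1)/(u - I*v))^2 - I*z*((w-1)/(u-I*v)) + (y - I*x)/2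
      = ((y+I*x)/2*(w-1)^2 - I*z*(w-1)*(u-I*v) + (y-I*x)/2*(u-I*v)^2) / (u-I*v)^2 := by
    field_simp
  rw [hrhs, div_eq_div_iff hd2 hd2]
  linear_combination ((y + I*x)/2 * (u - I*v)^2) * hs +
    (u*y*v^3*I + 2*u*v^2*z*(w-1)*I - 2*u*v^3*x*I^2 - u^2*y*v^2/2 + u^2*v*z*(1-w)
      + (5/2)*u^2*v^2*x*I - u^3*v*x - (1/2)*y*v^4*I^2 + v^3*z*(1-w)*I^2 + (1/2)*v^4*x*I^3) * hI

/-- **The second stereographic variable satisfies the same Riccati equation**: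
if `(U, V, W)` is differentiable, solves `U′ = V·w_z − W·w_y`,
`V′ = W·w_x − U·w_z`, `W′ = U·w_y − V·w_x`, stays on the unit sphere, and
`U − iV ≠ 0`, then `η = (W − 1)/(U − iV)` is differentiable and satisfies
`η′ = ((w_y + i·w_x)/2)·η² − i·w_z·η + (w_y − i·w_x)/2`. -/
theorem eta_satisfies_riccati
    (U V W wx wy wz : ℝ → ℝ)
    (hU : Differentiable ℝ U) (hV : Differentiable ℝ V) (hW : Differentiable ℝ W)
    (hU' : ∀ t, deriv U t = V t * wz t - W t * wy t)
    (hV' : ∀ t, deriv V t = W t * wx t - U t * wz t)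
    (hW' : ∀ t, deriv W t = U t * wy t - V t * wx t)
    (hsphere : ∀ t, U t ^ 2 + V t ^ 2 + W t ^ 2 = 1)
    (hUV : ∀ t, (U t : ℂ) - I * (V t : ℂ) ≠ 0)
    (η : ℝ → ℂ)
    (hη : ∀ t, η t = ((W t : ℂ) - 1) / ((U t : ℂ) - I * (V t : ℂ))) :
    Differentiable ℝ η ∧
      ∀ t, deriv η t
        = (((wy t : ℂ) + I * (wx t : ℂ)) / 2) * η t ^ 2
            - I * (wz t : ℂ) * η t
            + ((wy t : ℂ) - I * (wx t : ℂ)) / 2 := by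
  have key : ∀ t, HasDerivAt η
      ((((U t : ℂ) * wy t - V t * wx t) * ((U t : ℂ) - I * V t)
        - ((W t : ℂ) - 1) * (((V t : ℂ) * wz t - W t * wy t)
            - I * ((W t : ℂ) * wx t - U t * wz t)))
        / ((U t : ℂ) - I * V t) ^ 2) t := by
    intro t
    have hNu : HasDerivAt (fun s => ((U s : ℂ))) ((V t * wz t - W t * wy t : ℝ) : ℂ) t := by
      have := (hU t).hasDerivAt
      rw [← hU' t] at *
      exact HasDerivAt.ofReal_comp this
    have hNv : HasDerivAt (fun s => ((V s : ℂ))) ((W t * wx t - U t * wz t : ℝ) : ℂ) t := by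
      have := (hV t).hasDerivAt
      rw [← hV' t] at *
      exact HasDerivAt.ofReal_comp this
    have hNw : HasDerivAt (fun s => ((W s : ℂ))) ((U t * wy t - V t * wx t : ℝ) : ℂ) t := by
      have := (hW t).hasDerivAt
      rw [← hW' t] at *
      exact HasDerivAt.ofReal_comp this
    have hNum : HasDerivAt (fun s => ((W s : ℂ) - 1))
        ((U t * wy t - V t * wx t : ℝ) : ℂ) t := hNw.sub_const 1
    have hDen : HasDerivAt (fun s => ((U s : ℂ) - I * V s))
        (((V t * wz t - W t * wy t : ℝ) : ℂ) - I * ((W t * wx t - U t * wz t : ℝ) : ℂ)) t :=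
      hNu.sub ((hNv.const_mul I))
    have hdiv := hNum.div hDen (hUV t)
    have : η = fun s => ((W s : ℂ) - 1) / ((U s : ℂ) - I * V s) := funext hη
    rw [this]
    refine hdiv.congr_deriv ?_
    push_cast
    ring
  constructor
  · exact fun t => (key t).differentiableAt
  · intro t
    rw [(key t).deriv, hη t]
    have hs : (U t : ℂ) ^ 2 + (V t : ℂ) ^ 2 + (W t : ℂ) ^ 2 = 1 := by
      exact_mod_cast congrArg (Complex.ofReal) (hsphere t)
    exact riccati_algebra (U t) (V t) (W t) (wx t) (wy t) (wz t) (hUV t) hs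
end

section
/- Let w_x, w_y, w_z : ℝ → ℝ be continuous, let γ ∈ ℝ, and let ξ : ℝ → ℂ be differentiable and satisfy the Riccati equation ξ′ = ((w_y + i·w_x)/2)·ξ² − i·w_z·ξ + (w_y − i·w_x)/2 on ℝ. Define real functions U(t) = 2γ·Re ξ(t)/(|ξ(t)|² + 1), V(t) = 2γ·Im ξ(t)/(|ξ(t)|² + 1), W(t) = γ·(|ξ(t)|² − 1)/(|ξ(t)|² + 1). Then (U, V, W) is differentiable, satisfies U(t)² + V(t)² + W(t)² = γ² for all t, and solves the homogeneous system U′ = V·w_z − W·w_y, V′ = W·w_x − U·w_z, W′ = U·w_y − V·w_x on ℝ. -/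
open Complex

/-- **Inverse stereographic reconstruction of solutions of `u′ = u × w` from a
solution of the Riccati equation**: if `ξ : ℝ → ℂ` is differentiable and solves
`ξ′ = ((w_y + i·w_x)/2)·ξ² − i·w_z·ξ + (w_y − i·w_x)/2` with `w_x, w_y, w_z`
continuous, then `U = 2γ·Re ξ/(|ξ|² + 1)`, `V = 2γ·Im ξ/(|ξ|² + 1)`,
`W = γ·(|ξ|² − 1)/(|ξ|² + 1)` are differentiable, lie on the sphere of radius
`|γ|`, and solve the homogeneous system `U′ = V·w_z − W·w_y`,
`V′ = W·w_x − U·w_z`, `W′ = U·w_y − V·w_x`. -/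
theorem inverse_stereographic_solves_cross_system
    (wx wy wz : ℝ → ℝ) (hwx : Continuous wx) (hwy : Continuous wy)
    (hwz : Continuous wz) (γ : ℝ)
    (ξ : ℝ → ℂ) (hξ : Differentiable ℝ ξ)
    (hric : ∀ t, deriv ξ t
      = (((wy t : ℂ) + I * (wx t : ℂ)) / 2) * ξ t ^ 2
          - I * (wz t : ℂ) * ξ t
          + ((wy t : ℂ) - I * (wx t : ℂ)) / 2)
    (U V W : ℝ → ℝ)
    (hU : ∀ t, U t = 2 * γ * (ξ t).re / (‖ξ t‖ ^ 2 + 1))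
    (hV : ∀ t, V t = 2 * γ * (ξ t).im / (‖ξ t‖ ^ 2 + 1))
    (hW : ∀ t, W t = γ * (‖ξ t‖ ^ 2 - 1) / (‖ξ t‖ ^ 2 + 1)) :
    (Differentiable ℝ U ∧ Differentiable ℝ V ∧ Differentiable ℝ W) ∧
    (∀ t, U t ^ 2 + V t ^ 2 + W t ^ 2 = γ ^ 2) ∧
    (∀ t, deriv U t = V t * wz t - W t * wy t) ∧
    (∀ t, deriv V t = W t * wx t - U t * wz t) ∧
    (∀ t, deriv W t = U t * wy t - V t * wx t) := by
  have habs : ∀ z : ℂ, ‖z‖ ^ 2 = z.re ^ 2 + z.im ^ 2 := by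
    intro z; rw [Complex.sq_norm, Complex.normSq_apply]; ring
  have hD : ∀ t, (ξ t).re ^ 2 + (ξ t).im ^ 2 + 1 ≠ 0 := fun t => by positivity
  -- derivatives of real and imaginary parts
  have hxd : ∀ t, HasDerivAt (fun s => (ξ s).re)
      (wy t * ((ξ t).re ^ 2 - (ξ t).im ^ 2 + 1) / 2
        - wx t * (ξ t).re * (ξ t).im + wz t * (ξ t).im) t := by
    intro t
    have h2 := Complex.reCLM.hasFDerivAt.comp_hasDerivAt t (hξ t).hasDerivAt
    have h3 : (deriv ξ t).re
        = wy t * ((ξ t).re ^ 2 - (ξ t).im ^ 2 + 1) / 2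
          - wx t * (ξ t).re * (ξ t).im + wz t * (ξ t).im := by
      rw [hric t]
      simp [Complex.add_re, Complex.sub_re, Complex.mul_re, Complex.div_re,
        Complex.normSq_apply, pow_two]
      ring
    exact h3 ▸ h2
  have hyd : ∀ t, HasDerivAt (fun s => (ξ s).im)
      (wx t * ((ξ t).re ^ 2 - (ξ t).im ^ 2 - 1) / 2
        + wy t * (ξ t).re * (ξ t).im - wz t * (ξ t).re) t := by
    intro t
    have h2 := Complex.imCLM.hasFDerivAt.comp_hasDerivAt t (hξ t).hasDerivAt
    have h3 : (deriv ξ t).im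
        = wx t * ((ξ t).re ^ 2 - (ξ t).im ^ 2 - 1) / 2
          + wy t * (ξ t).re * (ξ t).im - wz t * (ξ t).re := by
      rw [hric t]
      simp [Complex.add_im, Complex.sub_im, Complex.mul_im, Complex.div_im,
        Complex.normSq_apply, pow_two]
      ring
    exact h3 ▸ h2
  -- derivative of the denominator
  have hDd : ∀ t, HasDerivAt (fun s => (ξ s).re ^ 2 + (ξ s).im ^ 2 + 1)
      (2 * (ξ t).re ^ 1 * (wy t * ((ξ t).re ^ 2 - (ξ t).im ^ 2 + 1) / 2
          - wx t * (ξ t).re * (ξ t).im + wz t * (ξ t).im)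
       + 2 * (ξ t).im ^ 1 * (wx t * ((ξ t).re ^ 2 - (ξ t).im ^ 2 - 1) / 2
          + wy t * (ξ t).re * (ξ t).im - wz t * (ξ t).re)) t := by
    intro t
    have := (((hxd t).pow 2).add ((hyd t).pow 2)).add_const 1
    simpa using this
  -- rewrite U, V, W as explicit functions
  have hUf : U = fun s => 2 * γ * (ξ s).re / ((ξ s).re ^ 2 + (ξ s).im ^ 2 + 1) :=
    funext fun s => by rw [hU s, habs]
  have hVf : V = fun s => 2 * γ * (ξ s).im / ((ξ s).re ^ 2 + (ξ s).im ^ 2 + 1) :=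
    funext fun s => by rw [hV s, habs]
  have hWf : W = fun s => γ * ((ξ s).re ^ 2 + (ξ s).im ^ 2 - 1)
      / ((ξ s).re ^ 2 + (ξ s).im ^ 2 + 1) :=
    funext fun s => by rw [hW s, habs]
  have hUd : ∀ t, HasDerivAt U _ t := fun t =>
    hUf ▸ (((hxd t).const_mul (2 * γ)).fun_div (hDd t) (hD t))
  have hVd : ∀ t, HasDerivAt V _ t := fun t =>
    hVf ▸ (((hyd t).const_mul (2 * γ)).fun_div (hDd t) (hD t))
  have hWd : ∀ t, HasDerivAt W _ t := fun t =>
    hWf ▸ (((((((hxd t).pow 2).add ((hyd t).pow 2)).sub_const 1).const_mul γ)).fun_div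
      (hDd t) (hD t))
  refine ⟨⟨fun t => (hUd t).differentiableAt, fun t => (hVd t).differentiableAt,
    fun t => (hWd t).differentiableAt⟩, ?_, ?_, ?_, ?_⟩
  · intro t
    rw [hU t, hV t, hW t, habs]
    field_simp
    ring
  · intro t
    rw [(hUd t).deriv, hV t, hW t, habs]
    field_simp
    ring
  · intro t
    rw [(hVd t).deriv, hU t, hW t, habs]
    field_simp
    ring
  · intro t
    rw [(hWd t).deriv, hU t, hV t, habs]
    simp only [Pi.add_apply, Pi.pow_apply]
    field_simp
    ring
end

section
/- Let ν be a constant, ρ > 0 a constant, and let φ_pot : ℝ × ℝ³ → ℝ (velocity potential), u_w : ℝ × ℝ³ → ℝ³ (solenoidal velocity), p : ℝ × ℝ³ → ℝ (pressure), and φ : ℝ × ℝ³ → ℝ (body-force potential) be smooth. Set u_p = ∇φ_pot (spatial gradient), u = u_p + u_w, and w = ∇ × u_w (spatial curl). Assume on all of ℝ × ℝ³: (i) Δφ_pot = 0 (the potential is spatially harmonic); (ii) ∇ · u_w = 0; (iii) ∂u_p/∂t = u × w; (iv) ∂u_w/∂t = ν Δu_w; (v) (1/ρ)∇p = −∇φ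 − (1/2)∇(‖u‖²). Then the pair (u, p) solves the incompressible Navier–Stokes equations with body-force potential φ: ∇ · u = 0 and ∂u/∂t + (u·∇)u = −(1/ρ)∇p + ν Δu − ∇φ on ℝ × ℝ³. -/
open scoped Matrix BigOperators

/-- Partial derivative of a scalar field on ℝ³ in the `j`-th coordinate direction. -/
noncomputable def pd (f : (Fin 3 → ℝ) → ℝ) (j : Fin 3) : (Fin 3 → ℝ) → ℝ :=
  fun x => fderiv ℝ f x (Pi.single j 1)

/-- The curl of a vector field on ℝ³. -/
noncomputable def curl (u : (Fin 3 → ℝ) → (Fin 3 → ℝ)) (x : Fin 3 → ℝ) : Fin 3 → ℝ :=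
  ![pd (fun y => u y 2) 1 x - pd (fun y => u y 1) 2 x,
    pd (fun y => u y 0) 2 x - pd (fun y => u y 2) 0 x,
    pd (fun y => u y 1) 0 x - pd (fun y => u y 0) 1 x]

/-- Componentwise Laplacian of a vector field on ℝ³. -/
noncomputable def vecLap (u : (Fin 3 → ℝ) → (Fin 3 → ℝ)) (x : Fin 3 → ℝ) : Fin 3 → ℝ :=
  fun i => ∑ j, pd (pd (fun y => u y i) j) j x


lemma pd_congr' {f g : (Fin 3 → ℝ) → ℝ} (h : ∀ y, f y = g y) (j : Fin 3) (x : Fin 3 → ℝ) :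
    pd f j x = pd g j x := by rw [funext h]

lemma pd_zero (j : Fin 3) (x : Fin 3 → ℝ) : pd (fun _ => (0:ℝ)) j x = 0 := by simp [pd]

lemma pd_add' {f g : (Fin 3 → ℝ) → ℝ} {j : Fin 3} {x : Fin 3 → ℝ}
    (hf : DifferentiableAt ℝ f x) (hg : DifferentiableAt ℝ g x) :
    pd (fun y => f y + g y) j x = pd f j x + pd g j x := by
  simp [pd, fderiv_fun_add hf hg]

lemma pd_sum' {F : Fin 3 → (Fin 3 → ℝ) → ℝ} {j : Fin 3} {x : Fin 3 → ℝ}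
    (h : ∀ k, DifferentiableAt ℝ (F k) x) :
    pd (fun y => ∑ k, F k y) j x = ∑ k, pd (F k) j x := by
  simp [pd, fderiv_fun_sum (fun k _ => h k)]

lemma pd_sq' {f : (Fin 3 → ℝ) → ℝ} {j : Fin 3} {x : Fin 3 → ℝ} (hf : DifferentiableAt ℝ f x) :
    pd (fun y => f y ^ 2) j x = 2 * f x * pd f j x := by
  have h : (fun y => f y ^ 2) = fun y => f y * f y := by funext y; ring
  rw [h]
  simp only [pd]
  rw [fderiv_fun_mul hf hf]
  simp
  ring

lemma pd_contDiff {f : (Fin 3 → ℝ) → ℝ} (hf : ContDiff ℝ (⊤ : ℕ∞) f) (j : Fin 3) :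
    ContDiff ℝ (⊤ : ℕ∞) (pd f j) :=
  (hf.fderiv_right (by simp)).clm_apply contDiff_const

lemma pd_pd_eq {f : (Fin 3 → ℝ) → ℝ} (hf : ContDiff ℝ (⊤ : ℕ∞) f) (i j : Fin 3) (x : Fin 3 → ℝ) :
    pd (pd f i) j x = fderiv ℝ (fderiv ℝ f) x (Pi.single j 1) (Pi.single i 1) := by
  unfold pd
  rw [fderiv_clm_apply ((hf.fderiv_right (m := (⊤ : ℕ∞)) (by simp)).differentiable (by simp) x)
      (differentiableAt_const _)]
  simp

lemma pd_comm {f : (Fin 3 → ℝ) → ℝ} (hf : ContDiff ℝ (⊤ : ℕ∞) f) (i j : Fin 3) (x : Fin 3 → ℝ) :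
    pd (pd f i) j x = pd (pd f j) i x := by
  rw [pd_pd_eq hf, pd_pd_eq hf]
  exact second_derivative_symmetric
    (fun y => ((hf.differentiable (by simp)) y).hasFDerivAt)
    (((hf.fderiv_right (m := (⊤ : ℕ∞)) (by simp)).differentiable (by simp) x).hasFDerivAt) _ _

/-- **The split system solves the incompressible Navier–Stokes equations**: if
`u_p = ∇φ_pot` with `φ_pot` spatially harmonic, `u_w` is divergence-free with
curl `w`, `∂u_p/∂t = u × w`, `∂u_w/∂t = ν Δu_w`, and
`(1/ρ)∇p = −∇φ − (1/2)∇‖u‖²` (all on `ℝ × ℝ³`, with everything smooth), then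
`u = u_p + u_w` together with `p` solves `∇ · u = 0` and
`∂u/∂t + (u·∇)u = −(1/ρ)∇p + ν Δu − ∇φ` on `ℝ × ℝ³`. -/
theorem split_system_solves_navier_stokes
    (ν ρ : ℝ) (hρ : 0 < ρ)
    (φpot p φ : ℝ × (Fin 3 → ℝ) → ℝ) (uw : ℝ × (Fin 3 → ℝ) → (Fin 3 → ℝ))
    (hφpot : ContDiff ℝ (⊤ : ℕ∞) φpot) (hp : ContDiff ℝ (⊤ : ℕ∞) p) (hφ : ContDiff ℝ (⊤ : ℕ∞) φ)
    (huw : ContDiff ℝ (⊤ : ℕ∞) uw)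
    (up u : ℝ × (Fin 3 → ℝ) → (Fin 3 → ℝ)) (w : ℝ × (Fin 3 → ℝ) → (Fin 3 → ℝ))
    (hup : ∀ (t : ℝ) (x : Fin 3 → ℝ), up (t, x) = fun i => pd (fun y => φpot (t, y)) i x)
    (hu : ∀ tx : ℝ × (Fin 3 → ℝ), u tx = up tx + uw tx)
    (hw : ∀ (t : ℝ) (x : Fin 3 → ℝ), w (t, x) = curl (fun y => uw (t, y)) x)
    (hharm : ∀ (t : ℝ) (x : Fin 3 → ℝ), ∑ j, pd (pd (fun y => φpot (t, y)) j) j x = 0)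
    (hdivw : ∀ (t : ℝ) (x : Fin 3 → ℝ), ∑ i, pd (fun y => uw (t, y) i) i x = 0)
    (hmomp : ∀ (t : ℝ) (x : Fin 3 → ℝ) (i : Fin 3),
      deriv (fun s => up (s, x) i) t = (u (t, x) ⨯₃ w (t, x)) i)
    (hheat : ∀ (t : ℝ) (x : Fin 3 → ℝ) (i : Fin 3),
      deriv (fun s => uw (s, x) i) t = ν * vecLap (fun y => uw (t, y)) x i)
    (hpress : ∀ (t : ℝ) (x : Fin 3 → ℝ) (i : Fin 3),
      (1 / ρ) * pd (fun y => p (t, y)) i x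
        = -pd (fun y => φ (t, y)) i x
          - (1 / 2 : ℝ) * pd (fun y => ∑ k, u (t, y) k ^ 2) i x) :
    (∀ (t : ℝ) (x : Fin 3 → ℝ), ∑ i, pd (fun y => u (t, y) i) i x = 0) ∧
    (∀ (t : ℝ) (x : Fin 3 → ℝ) (i : Fin 3),
      deriv (fun s => u (s, x) i) t + ∑ j, u (t, x) j * pd (fun y => u (t, y) i) j x
        = -(1 / ρ) * pd (fun y => p (t, y)) i x
          + ν * vecLap (fun y => u (t, y)) x i
          - pd (fun y => φ (t, y)) i x) := by
  have hu' : ∀ (t : ℝ) (y : Fin 3 → ℝ) (i : Fin 3),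
      u (t, y) i = pd (fun z => φpot (t, z)) i y + uw (t, y) i := by
    intro t y i
    rw [hu (t, y)]
    simp [hup t y]
  have hfφ : ∀ t, ContDiff ℝ (⊤ : ℕ∞) (fun y => φpot (t, y)) :=
    fun t => hφpot.comp (contDiff_const.prodMk contDiff_id)
  have hfw : ∀ t i, ContDiff ℝ (⊤ : ℕ∞) (fun y => uw (t, y) i) :=
    fun t i => contDiff_pi.1 (huw.comp (contDiff_const.prodMk contDiff_id)) i
  have hdφ : ∀ t i, ContDiff ℝ (⊤ : ℕ∞) (pd (fun y => φpot (t, y)) i) := fun t i => pd_contDiff (hfφ t) i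
  have hdu : ∀ t i (y : Fin 3 → ℝ), DifferentiableAt ℝ (fun z => u (t, z) i) y := by
    intro t i y
    have h1 : (fun z => u (t, z) i) = fun z => pd (fun z' => φpot (t, z')) i z + uw (t, z) i :=
      funext fun z => hu' t z i
    rw [h1]
    exact ((hdφ t i).differentiable (by simp) y).add ((hfw t i).differentiable (by simp) y)
  have hpdu : ∀ t i j (y : Fin 3 → ℝ), pd (fun z => u (t, z) i) j y
      = pd (pd (fun z => φpot (t, z)) i) j y + pd (fun z => uw (t, z) i) j y := by
    intro t i j y
    rw [pd_congr' (fun z => hu' t z i)]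
    exact pd_add' ((hdφ t i).differentiable (by simp) y) ((hfw t i).differentiable (by simp) y)
  constructor
  · intro t x
    have h1 : ∀ i : Fin 3, pd (fun y => u (t, y) i) i x
        = pd (pd (fun y => φpot (t, y)) i) i x + pd (fun y => uw (t, y) i) i x :=
      fun i => hpdu t i i x
    rw [Finset.sum_congr rfl fun i _ => h1 i, Finset.sum_add_distrib, hharm t x, hdivw t x,
      add_zero]
  · intro t x i
    -- time derivative splits
    have hupt : ∀ (j : Fin 3), ContDiff ℝ (⊤ : ℕ∞) (fun s => up (s, x) j) := by
      intro j
      have h1 : (fun s => up (s, x) j)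
          = fun s => (fderiv ℝ φpot (s, x)) ((0:ℝ), Pi.single j 1) := by
        funext s
        rw [hup s x]
        show pd (fun y => φpot (s, y)) j x = _
        unfold pd
        have hcomp : (fun y => φpot (s, y)) = φpot ∘ (fun y => ((s:ℝ), y)) := rfl
        rw [hcomp, fderiv_comp x ((hφpot.differentiable (by simp)) (s, x))
          ((hasFDerivAt_prodMk_right s x).differentiableAt),
          (hasFDerivAt_prodMk_right s x).fderiv]
        rfl
      rw [h1]
      exact ((hφpot.fderiv_right (by simp)).comp
        (contDiff_id.prodMk contDiff_const)).clm_apply contDiff_const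
    have huwt : ∀ (j : Fin 3), ContDiff ℝ (⊤ : ℕ∞) (fun s => uw (s, x) j) :=
      fun j => contDiff_pi.1 (huw.comp (contDiff_id.prodMk contDiff_const)) j
    have hderiv : deriv (fun s => u (s, x) i) t
        = deriv (fun s => up (s, x) i) t + deriv (fun s => uw (s, x) i) t := by
      have h1 : (fun s => u (s, x) i) = fun s => up (s, x) i + uw (s, x) i := by
        funext s; rw [hu (s, x)]; rfl
      rw [h1, deriv_fun_add ((hupt i).differentiable (by simp) t) ((huwt i).differentiable (by simp) t)]
    -- Laplacian of u equals Laplacian of uw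
    have hlap : vecLap (fun y => u (t, y)) x i = vecLap (fun y => uw (t, y)) x i := by
      unfold vecLap
      have e1 : ∀ j : Fin 3, pd (pd (fun y => u (t, y) i) j) j x
          = pd (pd (pd (fun y => φpot (t, y)) i) j) j x
            + pd (pd (fun y => uw (t, y) i) j) j x := by
        intro j
        rw [pd_congr' (fun y => hpdu t i j y)]
        exact pd_add' ((pd_contDiff (hdφ t i) j).differentiable (by simp) x)
          ((pd_contDiff (hfw t i) j).differentiable (by simp) x)
      have e2 : ∀ j : Fin 3, pd (pd (pd (fun y => φpot (t, y)) i) j) j x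
          = pd (pd (pd (fun y => φpot (t, y)) j) j) i x := by
        intro j
        rw [pd_congr' (fun y => pd_comm (hfφ t) i j y)]
        exact pd_comm (pd_contDiff (hfφ t) j) i j x
      have e3 : ∑ j, pd (pd (pd (fun y => φpot (t, y)) j) j) i x = 0 := by
        rw [← pd_sum' (fun j =>
          ((pd_contDiff (pd_contDiff (hfφ t) j) j).differentiable (by simp) x)),
          pd_congr' (fun y => hharm t y), pd_zero]
      have e4 : ∑ j, pd (pd (fun y => u (t, y) i) j) j x
          = (∑ j, pd (pd (pd (fun y => φpot (t, y)) j) j) i x)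
            + ∑ j, pd (pd (fun y => uw (t, y) i) j) j x := by
        rw [← Finset.sum_add_distrib]
        refine Finset.sum_congr rfl fun j _ => ?_
        rw [e1 j, e2 j]
      rw [e4, e3, zero_add]
    -- pressure identity
    have hpress' : -(1 / ρ) * pd (fun y => p (t, y)) i x
        = pd (fun y => φ (t, y)) i x + ∑ k, u (t, x) k * pd (fun y => u (t, y) k) i x := by
      have h2 : pd (fun y => ∑ k, u (t, y) k ^ 2) i x
          = ∑ k, 2 * u (t, x) k * pd (fun y => u (t, y) k) i x := by
        rw [pd_sum' (F := fun k y => u (t, y) k ^ 2) (fun k => (hdu t k x).pow 2)]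
        exact Finset.sum_congr rfl fun k _ => pd_sq' (hdu t k x)
      have h4 : (1/2 : ℝ) * ∑ k, 2 * u (t, x) k * pd (fun y => u (t, y) k) i x
          = ∑ k, u (t, x) k * pd (fun y => u (t, y) k) i x := by
        rw [Finset.mul_sum]
        exact Finset.sum_congr rfl fun k _ => by ring
      have h5 : -(1 / ρ) * pd (fun y => p (t, y)) i x
          = pd (fun y => φ (t, y)) i x
            + (1/2 : ℝ) * pd (fun y => ∑ k, u (t, y) k ^ 2) i x := by
        linarith [hpress t x i]
      rw [h5, h2, h4]
    -- key vector identity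
    have hkey : (u (t, x) ⨯₃ w (t, x)) i + ∑ j, u (t, x) j * pd (fun y => u (t, y) i) j x
        = ∑ k, u (t, x) k * pd (fun y => u (t, y) k) i x := by
      have hA : ∀ a b : Fin 3, pd (pd (fun y => φpot (t, y)) a) b x
          = pd (pd (fun y => φpot (t, y)) b) a x := fun a b => pd_comm (hfφ t) a b x
      rw [hw t x]
      fin_cases i
      · simp only [show ((⟨0, by norm_num⟩ : Fin 3) : Fin 3) = 0 from rfl, cross_apply, curl,
          Fin.sum_univ_three, hpdu t, Matrix.cons_val_zero,
          Matrix.cons_val_one, Matrix.head_cons, Matrix.cons_val_two, Matrix.tail_cons]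
        linear_combination (u (t, x) 1) * hA 0 1 + (u (t, x) 2) * hA 0 2
      · simp only [show ((⟨1, by norm_num⟩ : Fin 3) : Fin 3) = 1 from rfl, cross_apply, curl,
          Fin.sum_univ_three, hpdu t, Matrix.cons_val_zero,
          Matrix.cons_val_one, Matrix.head_cons, Matrix.cons_val_two, Matrix.tail_cons]
        linear_combination (u (t, x) 0) * hA 1 0 + (u (t, x) 2) * hA 1 2
      · simp only [show ((⟨2, by norm_num⟩ : Fin 3) : Fin 3) = 2 from rfl, cross_apply, curl,
          Fin.sum_univ_three, hpdu t, Matrix.cons_val_zero,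
          Matrix.cons_val_one, Matrix.head_cons, Matrix.cons_val_two, Matrix.tail_cons]
        linear_combination (u (t, x) 0) * hA 2 0 + (u (t, x) 1) * hA 2 1
    rw [hderiv, hmomp t x i, hheat t x i, hpress', hlap]
    linarith [hkey]
end
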